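/- Fix principal curvatures κ_1,…,κ_{n−1} with H = Σ_α κ_α and a real number φ_n, for n ≥ 2. Then (i/(2π)^n) ∫_{ℝ^{n−1}} ∫_C e^{−τ} [ (w_1−τ)^{−2} ( (1/2)(H + φ_n) − (1/2) w_1^{−2} Σ_α κ_α ξ_α² ) ] dτ dξ′ = (ω_{n−2} Γ(n−1)/(2(2π)^{n−1})) ( (n−2)H/(n−1) + φ_n ), where w_1 = |ξ′| and C is a contour around the positive real axis. -/

import Mathlib

/-!
The `τ`-integral is Cauchy's formula for the derivative of `e^{-τ}` at `w₁ = ‖ξ‖`, so it equals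
`-2πi e^{-‖ξ‖}` times the (τ-independent) symbol. In polar coordinates
`∫ e^{-‖ξ‖} dξ = ω_{m-1} Γ(m)` on `ℝ^m`, and since permuting coordinates is an isometry, all the
integrals `∫ e^{-‖ξ‖} ξ_α² / ‖ξ‖²` are equal; they sum to `∫ e^{-‖ξ‖}`, so each is `1/m` of it.
-/

open Real MeasureTheory Metric Module

theorem circleIntegral_mul_sub_zpow_neg_two {f : ℂ → ℂ} {c : ℂ} {R : ℝ} (hR : 0 < R)
    (hf : DifferentiableOn ℂ f (closedBall c R)) :
    (∮ τ in C(c, R), f τ * (c - τ) ^ (-2 : ℤ)) = 2 * π * Complex.I * deriv f c := by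
  rw [← smul_eq_mul, ← hf.deriv_eq_smul_circleIntegral hR]
  congr 1 with τ
  rw [smul_eq_mul, zpow_neg, ← neg_sub, even_two.neg_zpow, zpow_ofNat, one_div, mul_comm]

theorem circleIntegral_exp_neg_mul_sub_zpow_neg_two (c : ℂ) {R : ℝ} (hR : 0 < R) :
    (∮ τ in C(c, R), Complex.exp (-τ) * (c - τ) ^ (-2 : ℤ)) =
      -(2 * π * Complex.I * Complex.exp (-c)) := by
  have hd : HasDerivAt (fun τ : ℂ => Complex.exp (-τ)) (Complex.exp (-c) * -1) c :=
    (hasDerivAt_neg c).cexp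
  rw [circleIntegral_mul_sub_zpow_neg_two hR (by fun_prop), hd.deriv]
  ring

theorem circleIntegral_exp_neg_mul_sub_zpow_neg_two_mul (c A : ℂ) {R : ℝ} (hR : 0 < R) :
    (∮ τ in C(c, R), Complex.exp (-τ) * ((c - τ) ^ (-2 : ℤ) * A)) =
      -(2 * π * Complex.I) * (Complex.exp (-c) * A) := by
  simp_rw [← mul_assoc, mul_comm _ A, circleIntegral.integral_const_mul,
    circleIntegral_exp_neg_mul_sub_zpow_neg_two c hR]
  ring

theorem integrable_exp_neg_norm {E : Type*} [NormedAddCommGroup E] [NormedSpace ℝ E]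
    [FiniteDimensional ℝ E] [MeasurableSpace E] [BorelSpace E]
    (μ : Measure E) [μ.IsAddHaarMeasure] :
    Integrable (fun x : E => Real.exp (-‖x‖)) μ := by
  obtain hE | hE := subsingleton_or_nontrivial E
  · exact .of_finite
  rw [integrable_fun_norm_addHaar μ (f := fun y => Real.exp (-y))]
  have := Real.GammaIntegral_convergent (s := ((finrank ℝ E - 1 : ℕ) : ℝ) + 1) (by positivity)
  refine this.congr_fun (fun y _ => ?_) measurableSet_Ioi
  simp [← Real.rpow_natCast, mul_comm]

theorem integral_exp_neg_norm {E : Type*} [NormedAddCommGroup E] [InnerProductSpace ℝ E]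
    [FiniteDimensional ℝ E] [MeasurableSpace E] [BorelSpace E] [Nontrivial E] :
    ∫ x : E, Real.exp (-‖x‖) =
      2 * π ^ ((finrank ℝ E : ℝ) / 2) / Real.Gamma ((finrank ℝ E : ℝ) / 2) *
        Real.Gamma (finrank ℝ E) := by
  have hd : 0 < finrank ℝ E := finrank_pos
  have hΓ : ∫ y in Set.Ioi (0 : ℝ), y ^ (finrank ℝ E - 1) • Real.exp (-y) =
      Real.Gamma (finrank ℝ E) := by
    rw [Real.Gamma_eq_integral (by positivity)]
    refine setIntegral_congr_fun measurableSet_Ioi fun y _ => ?_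
    rw [smul_eq_mul, mul_comm, ← Real.rpow_natCast, Nat.cast_sub hd, Nat.cast_one]
  rw [integral_fun_norm_addHaar volume (fun y => Real.exp (-y)), hΓ, measureReal_def,
    InnerProductSpace.volume_ball, ENNReal.ofReal_one, one_pow, one_mul,
    ENNReal.toReal_ofReal (by positivity), Real.Gamma_add_one (by positivity),
    Real.sqrt_eq_rpow, ← Real.rpow_natCast, ← Real.rpow_mul pi_pos.le, nsmul_eq_mul, smul_eq_mul]
  field_simp

section EuclideanSpace

variable {ι : Type*} [Fintype ι]

theorem sq_apply_le_sq_norm (x : EuclideanSpace ℝ ι) (i : ι) : x i ^ 2 ≤ ‖x‖ ^ 2 := by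
  rw [← sq_abs, ← Real.norm_eq_abs]
  exact pow_le_pow_left₀ (norm_nonneg _) (PiLp.norm_apply_le x i) 2

theorem integrable_mul_sq_apply_div_sq_norm {f : ℝ → ℝ}
    (hf : Integrable fun x : EuclideanSpace ℝ ι => f ‖x‖) (i : ι) :
    Integrable fun x : EuclideanSpace ℝ ι => f ‖x‖ * (x i ^ 2 / ‖x‖ ^ 2) := by
  have hm : Measurable fun x : EuclideanSpace ℝ ι => x i ^ 2 / ‖x‖ ^ 2 := by fun_prop
  refine hf.mul_bdd (c := 1) hm.aestronglyMeasurable (ae_of_all _ fun x => ?_)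
  rw [Real.norm_of_nonneg (by positivity)]
  exact div_le_one_of_le₀ (sq_apply_le_sq_norm x i) (sq_nonneg _)

theorem integral_mul_sq_apply_div_sq_norm_swap (f : ℝ → ℝ) (i j : ι) :
    ∫ x : EuclideanSpace ℝ ι, f ‖x‖ * (x i ^ 2 / ‖x‖ ^ 2) =
      ∫ x : EuclideanSpace ℝ ι, f ‖x‖ * (x j ^ 2 / ‖x‖ ^ 2) := by
  classical
  let e := LinearIsometryEquiv.piLpCongrLeft 2 ℝ ℝ (Equiv.swap i j)
  have he : ∀ x : EuclideanSpace ℝ ι, e x i = x j := fun x => by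
    simp [e, LinearIsometryEquiv.piLpCongrLeft_apply, Equiv.piCongrLeft']
  rw [← e.measurePreserving.integral_comp e.toHomeomorph.measurableEmbedding]
  simp_rw [LinearIsometryEquiv.norm_map, he]

theorem integral_mul_sq_apply_div_sq_norm {f : ℝ → ℝ}
    (hf : Integrable fun x : EuclideanSpace ℝ ι => f ‖x‖) (i : ι) :
    ∫ x : EuclideanSpace ℝ ι, f ‖x‖ * (x i ^ 2 / ‖x‖ ^ 2) =
      (∫ x : EuclideanSpace ℝ ι, f ‖x‖) / Fintype.card ι := by
  have : Nonempty ι := ⟨i⟩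
  have hsum : ∑ j : ι, ∫ x : EuclideanSpace ℝ ι, f ‖x‖ * (x j ^ 2 / ‖x‖ ^ 2) =
      ∫ x : EuclideanSpace ℝ ι, f ‖x‖ := by
    rw [← integral_finsetSum _ fun j _ => integrable_mul_sq_apply_div_sq_norm hf j]
    refine integral_congr_ae ?_
    filter_upwards [Measure.ae_ne volume (0 : EuclideanSpace ℝ ι)] with x hx
    rw [← Finset.mul_sum, ← Finset.sum_div, ← EuclideanSpace.real_norm_sq_eq,
      div_self (by positivity), mul_one]
  simp_rw [integral_mul_sq_apply_div_sq_norm_swap f _ i, Finset.sum_const, Finset.card_univ,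
    nsmul_eq_mul] at hsum
  rw [← hsum, mul_div_cancel_left₀ _ (by positivity)]

theorem integral_exp_neg_norm_mul_symbol (κ : ι → ℝ) (φ : ℝ) :
    ∫ ξ : EuclideanSpace ℝ ι, Real.exp (-‖ξ‖) *
        (1 / 2 * (∑ α, κ α + φ) - 1 / 2 * ‖ξ‖ ^ (-2 : ℤ) * ∑ α, κ α * ξ α ^ 2) =
      (∫ ξ : EuclideanSpace ℝ ι, Real.exp (-‖ξ‖)) / 2 *
        (∑ α, κ α - (∑ α, κ α) / Fintype.card ι + φ) := by
  have hexp := integrable_exp_neg_norm (volume : Measure (EuclideanSpace ℝ ι))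
  have hcoord (α : ι) :=
    (integrable_mul_sq_apply_div_sq_norm (f := fun r => Real.exp (-r)) hexp α).const_mul (κ α / 2)
  have hsplit : ∀ ξ : EuclideanSpace ℝ ι, Real.exp (-‖ξ‖) *
        (1 / 2 * (∑ α, κ α + φ) - 1 / 2 * ‖ξ‖ ^ (-2 : ℤ) * ∑ α, κ α * ξ α ^ 2) =
      1 / 2 * (∑ α, κ α + φ) * Real.exp (-‖ξ‖) -
        ∑ α, κ α / 2 * (Real.exp (-‖ξ‖) * (ξ α ^ 2 / ‖ξ‖ ^ 2)) := fun ξ => by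
    rw [mul_sub, mul_comm (Real.exp _), Finset.mul_sum, Finset.mul_sum]
    congr 1
    refine Finset.sum_congr rfl fun α _ => ?_
    rw [zpow_neg, zpow_ofNat]
    ring
  simp_rw [hsplit]
  rw [integral_sub (hexp.const_mul _) (integrable_finsetSum _ fun α _ => hcoord α),
    integral_finsetSum _ fun α _ => hcoord α, integral_const_mul]
  simp_rw [integral_const_mul,
    integral_mul_sq_apply_div_sq_norm (f := fun r => Real.exp (-r)) hexp,
    ← Finset.sum_mul, ← Finset.sum_div]
  ring

end EuclideanSpace

/-- The second heat-trace coefficient `a₁`: with `w₁ = |ξ′|`, `H = Σ κ_α`,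
`(i/(2π)^n) ∫ ∮ e^{−τ} (w₁−τ)^{−2} ((1/2)(H+φ_n) − (1/2) w₁^{−2} Σ κ_α ξ_α²) dτ dξ′
 = (ω_{n−2}Γ(n−1)/(2(2π)^{n−1})) ((n−2)H/(n−1) + φ_n)`. -/
theorem stmt_17 (n : ℕ) (hn : 2 ≤ n) (κ : Fin (n - 1) → ℝ) (φn : ℝ)
    (r : ℝ) (hr : 0 < r) :
    (Complex.I / (((2 * Real.pi) ^ n : ℝ) : ℂ)) *
        ∫ ξ : EuclideanSpace ℝ (Fin (n - 1)),
          (∮ τ in C((‖ξ‖ : ℂ), r),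
            Complex.exp (-τ) * (((‖ξ‖ : ℂ) - τ) ^ (-2 : ℤ) *
              ((1/2 : ℂ) * (((∑ α, κ α : ℝ) : ℂ) + (φn : ℂ))
                - (1/2 : ℂ) * ((‖ξ‖ : ℂ)) ^ (-2 : ℤ) *
                    ∑ α, ((κ α : ℝ) : ℂ) * ((ξ α : ℝ) : ℂ) ^ 2)))
      = ((((2 * Real.pi ^ (((n : ℝ) - 1) / 2) / Real.Gamma (((n : ℝ) - 1) / 2)) *
            Real.Gamma ((n : ℝ) - 1) / (2 * (2 * Real.pi) ^ (n - 1))) *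
          (((n : ℝ) - 2) * (∑ α, κ α) / ((n : ℝ) - 1) + φn) : ℝ) : ℂ) := by
  have hcast : ((n - 1 : ℕ) : ℝ) = n - 1 := by
    rw [Nat.cast_sub (by omega), Nat.cast_one]
  have hpow : ((2 : ℝ) * π) ^ n = 2 * π * (2 * π) ^ (n - 1) := by
    rw [← pow_succ', Nat.sub_add_cancel (by omega)]
  have : Nontrivial (EuclideanSpace ℝ (Fin (n - 1))) := by
    have : Nonempty (Fin (n - 1)) := ⟨⟨0, by omega⟩⟩
    infer_instance
  simp_rw [circleIntegral_exp_neg_mul_sub_zpow_neg_two_mul _ _ hr]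
  rw [integral_const_mul, integral_congr_ae (g := fun ξ => ((Real.exp (-‖ξ‖) *
      (1 / 2 * (∑ α, κ α + φn) - 1 / 2 * ‖ξ‖ ^ (-2 : ℤ) * ∑ α, κ α * ξ α ^ 2) : ℝ) : ℂ))
      (ae_of_all _ fun ξ => by push_cast; rfl),
    integral_complex_ofReal, integral_exp_neg_norm_mul_symbol, integral_exp_neg_norm,
    finrank_euclideanSpace, Fintype.card_fin, hcast, hpow]
  have hπ : (π : ℂ) ≠ 0 := Complex.ofReal_ne_zero.mpr pi_ne_zero
  have hn1 : (n : ℂ) - 1 ≠ 0 := sub_ne_zero.mpr (by exact_mod_cast (by omega : n ≠ 1))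
  push_cast
  field_simp
  ring_nf
  rw [Complex.I_sq]
  ring
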